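/- The optimal value of the following semidefinite program equals 3/4: maximize ⟨τ, Q⟩ over density matrices τ on Y ⊗ A ⊗ G = ℂ² ⊗ ℂ³ ⊗ ℂ², subject to Tr_G(τ) = Tr_B(|ψ⟩⟨ψ|), where |ψ⟩ = Σ_{y∈{0,1}} (1/√2)|y⟩_Y ⊗ |φ_y⟩_{A⊗B} ∈ ℂ² ⊗ ℂ³ ⊗ ℂ³ and Q = Σ_{y∈{0,1}} |y⟩⟨y|_Y ⊗ 1_A ⊗ |y⟩⟨y|_G. (This is the optimal cheating probability of Bob in the qutrit bit-commitment protocol: his best probability of guessing Alice's committed bit after receiving qutrit B.) -/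

import Mathlib

/-! STATEMENT 1: Bob's optimal cheating probability in the qutrit bit-commitment protocol equals 3/4. -/

open Matrix
open scoped Matrix BigOperators ComplexOrder

noncomputable section

/-- Square matrices over ℂ indexed by `α`. -/
abbrev Mat (α : Type) : Type := Matrix α α ℂ

/-- A density matrix: positive semidefinite with unit trace. -/
def IsDensity {α : Type} [Fintype α] [DecidableEq α] (ρ : Mat α) : Prop :=
  ρ.PosSemidef ∧ ρ.trace = 1

/-- Hilbert–Schmidt inner product ⟨P, Q⟩ = Tr(P† Q). -/
def hs {α : Type} [Fintype α] (P Q : Mat α) : ℂ := (Pᴴ * Q).trace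

/-- Outer product |v⟩⟨v|. -/
def outer {α : Type} (v : α → ℂ) : Mat α := fun i j => v i * star (v j)

/-- Standard basis vector |i⟩. -/
def ket {α : Type} [DecidableEq α] (i : α) : α → ℂ := fun j => if j = i then 1 else 0

/-- The embedding of Fin 2 into Fin 3. -/
def f23 (y : Fin 2) : Fin 3 := ⟨y.val, by omega⟩

/-- |φ_y⟩ = (|yy⟩ + |22⟩)/√2 ∈ ℂ³ ⊗ ℂ³. -/
def phi (y : Fin 2) : Fin 3 × Fin 3 → ℂ :=
  fun p => (ket (f23 y, f23 y) p + ket ((2 : Fin 3), (2 : Fin 3)) p) / (Real.sqrt 2 : ℂ)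

/-- Partial trace over the first tensor factor. -/
def ptrA {α β : Type} [Fintype α] (ρ : Mat (α × β)) : Mat β :=
  fun b b' => ∑ a, ρ (a, b) (a, b')

/-- |ψ⟩ = Σ_y (1/√2)|y⟩_Y ⊗ |φ_y⟩_{A⊗B}. -/
def psiBC : Fin 2 × Fin 3 × Fin 3 → ℂ :=
  fun p => phi p.1 (p.2.1, p.2.2) / (Real.sqrt 2 : ℂ)

/-- Partial trace over B, the last qutrit factor of Y ⊗ A ⊗ B. -/
def trB_psi (ρ : Mat (Fin 2 × Fin 3 × Fin 3)) : Mat (Fin 2 × Fin 3) :=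
  fun p q => ∑ b, ρ (p.1, p.2, b) (q.1, q.2, b)

/-- Partial trace over G, the last factor of Y ⊗ A ⊗ G. -/
def trG (τ : Mat (Fin 2 × Fin 3 × Fin 2)) : Mat (Fin 2 × Fin 3) :=
  fun p q => ∑ g, τ (p.1, p.2, g) (q.1, q.2, g)

/-- Q = Σ_y |y⟩⟨y|_Y ⊗ 1_A ⊗ |y⟩⟨y|_G. -/
def Qbc : Mat (Fin 2 × Fin 3 × Fin 2) := fun p q =>
  ∑ y : Fin 2, ket y p.1 * star (ket y q.1) *
    (if p.2.1 = q.2.1 then 1 else 0) * (ket y p.2.2 * star (ket y q.2.2))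

/-! The reduced state is `ρ = ¼ (|00⟩⟨00| + |11⟩⟨11| + |v⟩⟨v|)` with `v = |02⟩ + |12⟩`, and
`⟨τ, Q⟩ = Σ_{y,a} τ(yay, yay)`. For `a ∈ {0, 1}` each term is at most the diagonal entry
`ρ(ya, ya)` of the marginal, which gives `¼ + ¼`. For `a = 2`, the two blocks `τ(y2g, y'2g)` (`g = 0, 1`) are
positive semidefinite and add up to `¼` times the all-ones matrix, whose kernel contains `|0⟩ - |1⟩`;
so each block kills `|0⟩ - |1⟩` and has constant diagonal, and
`τ(020, 020) + τ(121, 121) = τ(120, 120) + τ(121, 121) = ρ(12, 12) = ¼`. -/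

theorem Matrix.PosSemidef.diag_eq_of_add_eq_const {𝕜 ι : Type*} [RCLike 𝕜] [Fintype ι]
    [DecidableEq ι] {A B : Matrix ι ι 𝕜} (hA : A.PosSemidef) (hB : B.PosSemidef) {c : 𝕜}
    (h : A + B = of fun _ _ => c) (i j : ι) : A i i = A j j := by
  set x : ι → 𝕜 := Pi.single i 1 - Pi.single j 1
  have hAB : (A + B) *ᵥ x = 0 := by
    rw [h]
    ext k
    simp [x, mulVec_sub]
  have hx : star x ⬝ᵥ A *ᵥ x + star x ⬝ᵥ B *ᵥ x = 0 := by
    rw [← dotProduct_add, ← add_mulVec, hAB, dotProduct_zero]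
  have hAx : A *ᵥ x = 0 := (hA.dotProduct_mulVec_zero_iff x).mp
    ((add_eq_zero_iff_of_nonneg (hA.dotProduct_mulVec_nonneg x)
      (hB.dotProduct_mulVec_nonneg x)).mp hx).1
  have hrow (k : ι) : A k i = A k j := by
    simpa [x, mulVec_sub, sub_eq_zero] using congrFun hAx k
  calc A i i = A i j := hrow i
    _ = star (A j i) := (hA.1.apply i j).symm
    _ = star (A j j) := by rw [hrow j]
    _ = A j j := hA.1.apply j j

lemma posSemidef_outer {ι : Type} [Fintype ι] (v : ι → ℂ) : (outer v).PosSemidef :=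
  posSemidef_vecMulVec_self_star v

lemma ofReal_sqrt_two_mul_self : (Real.sqrt 2 : ℂ) * Real.sqrt 2 = 2 := by
  rw [← Complex.ofReal_mul, Real.mul_self_sqrt zero_le_two, Complex.ofReal_ofNat]

lemma psiBC_eq :
    psiBC = (2⁻¹ : ℂ) • (ket (0, 0, 0) + ket (0, 2, 2) + ket (1, 1, 1) + ket (1, 2, 2)) := by
  funext ⟨y, a, b⟩
  fin_cases y <;> fin_cases a <;> fin_cases b <;>
    simp [psiBC, phi, ket, f23, div_eq_mul_inv, ← mul_inv, ofReal_sqrt_two_mul_self]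

lemma trB_psi_outer_psiBC : trB_psi (outer psiBC) =
    (4⁻¹ : ℂ) • (outer (ket (0, 0)) + outer (ket (1, 1)) + outer (ket (0, 2) + ket (1, 2))) := by
  funext ⟨y, a⟩ ⟨y', a'⟩
  fin_cases y <;> fin_cases y' <;> fin_cases a <;> fin_cases a' <;>
    simp [trB_psi, outer, psiBC_eq, ket, map_ofNat] <;> norm_num

lemma re_hs_Qbc (τ : Mat (Fin 2 × Fin 3 × Fin 2)) :
    (hs τ Qbc).re = ∑ y : Fin 2, ∑ a : Fin 3, (τ (y, a, y) (y, a, y)).re := by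
  simp [hs, Matrix.trace, Matrix.mul_apply, Matrix.conjTranspose_apply, Qbc, ket,
    Fintype.sum_prod_type, Fin.sum_univ_succ]

lemma re_apply_le_re_trG {τ : Mat (Fin 2 × Fin 3 × Fin 2)} (hτ : τ.PosSemidef)
    (y : Fin 2) (a : Fin 3) (g : Fin 2) :
    (τ (y, a, g) (y, a, g)).re ≤ (trG τ (y, a) (y, a)).re := by
  simp only [trG, Complex.re_sum]
  exact Finset.single_le_sum (f := fun g => (τ (y, a, g) (y, a, g)).re)
    (fun g _ => (Complex.nonneg_iff.mp hτ.diag_nonneg).1) (Finset.mem_univ g)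

lemma re_hs_Qbc_le {τ : Mat (Fin 2 × Fin 3 × Fin 2)} (hτ : τ.PosSemidef)
    (hc : trG τ = trB_psi (outer psiBC)) : (hs τ Qbc).re ≤ 3 / 4 := by
  rw [trB_psi_outer_psiBC] at hc
  have hblock : τ (0, 2, 0) (0, 2, 0) = τ (1, 2, 0) (1, 2, 0) := by
    refine (hτ.submatrix (fun y : Fin 2 => (y, (2 : Fin 3), (0 : Fin 2)))).diag_eq_of_add_eq_const
      (hτ.submatrix (fun y : Fin 2 => (y, (2 : Fin 3), (1 : Fin 2)))) (c := 4⁻¹) ?_ 0 1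
    ext y y'
    have := congrFun₂ hc (y, 2) (y', 2)
    fin_cases y <;> fin_cases y' <;> simpa [trG, Fin.sum_univ_two, outer, ket] using this
  have h12 : (τ (1, 2, 0) (1, 2, 0)).re + (τ (1, 2, 1) (1, 2, 1)).re = 4⁻¹ := by
    simpa [trG, Fin.sum_univ_two, outer, ket] using congrArg Complex.re (congrFun₂ hc (1, 2) (1, 2))
  have h000 : (τ (0, 0, 0) (0, 0, 0)).re ≤ 4⁻¹ := by
    simpa [hc, outer, ket] using re_apply_le_re_trG hτ 0 0 0
  have h010 : (τ (0, 1, 0) (0, 1, 0)).re ≤ 0 := by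
    simpa [hc, outer, ket] using re_apply_le_re_trG hτ 0 1 0
  have h101 : (τ (1, 0, 1) (1, 0, 1)).re ≤ 0 := by
    simpa [hc, outer, ket] using re_apply_le_re_trG hτ 1 0 1
  have h111 : (τ (1, 1, 1) (1, 1, 1)).re ≤ 4⁻¹ := by
    simpa [hc, outer, ket] using re_apply_le_re_trG hτ 1 1 1
  rw [re_hs_Qbc]
  simp only [Fin.sum_univ_two, Fin.sum_univ_three, hblock]
  linarith

/-- Bob guesses `a` when `a ∈ {0, 1}` and `0` when `a = 2`. -/
def cheatingState : Mat (Fin 2 × Fin 3 × Fin 2) :=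
  outer (ket (0, 0, 0) / 2) + outer (ket (1, 1, 1) / 2) +
    outer ((ket (0, 2, 0) + ket (1, 2, 0)) / 2)

lemma cheatingState_isDensity : IsDensity cheatingState := by
  refine ⟨.add (.add (posSemidef_outer _) (posSemidef_outer _)) (posSemidef_outer _), ?_⟩
  simp [cheatingState, Matrix.trace, Fintype.sum_prod_type, Fin.sum_univ_succ, outer, ket]
  norm_num

lemma trG_cheatingState : trG cheatingState = trB_psi (outer psiBC) := by
  rw [trB_psi_outer_psiBC]
  funext ⟨y, a⟩ ⟨y', a'⟩
  fin_cases y <;> fin_cases y' <;> fin_cases a <;> fin_cases a' <;>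
    simp [trG, cheatingState, outer, ket, Fin.sum_univ_two] <;> norm_num

lemma re_hs_cheatingState_Qbc : (hs cheatingState Qbc).re = 3 / 4 := by
  rw [re_hs_Qbc]
  simp [cheatingState, outer, ket, Fin.sum_univ_two, Fin.sum_univ_three]
  norm_num

theorem bit_commitment_cheating_Bob :
    IsGreatest
      {x : ℝ | ∃ τ : Mat (Fin 2 × Fin 3 × Fin 2),
        IsDensity τ ∧ trG τ = trB_psi (outer psiBC) ∧
        x = (hs τ Qbc).re}
      (3/4) :=
  ⟨⟨cheatingState, cheatingState_isDensity, trG_cheatingState, re_hs_cheatingState_Qbc.symm⟩,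
    fun _ ⟨_, ⟨hτ, _⟩, hc, hx⟩ => hx ▸ re_hs_Qbc_le hτ hc⟩

end
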